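/- arXiv:1608.01765 — 6 statements merged into one kernel-verified Lean document; each statement's English description precedes it below -/
import Mathlib

section
/- For every odd prime p, the function α_p is multiplicative: if k₁ and k₂ are coprime positive integers, then α_p(k₁·k₂) = α_p(k₁)·α_p(k₂). -/
/-!
As Dirichlet convolutions, `α_p = (δ₁ + δ_p) ∗ (δ₁ - 3δ₂ + 2δ₄) ∗ (n ↦ σ₁(n)/n)`, where
`δ_d` (`single d 1` below) is the indicator of `{d}`: the six terms of `α_p` are the six
products of a term of the first factor with a term of the second. The last factor is
multiplicative as a quotient of multiplicative functions, and the first two because an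
arithmetic function with value `1` at `1` that is supported on the powers of a single prime
is multiplicative. Dirichlet convolution preserves multiplicativity.
-/

open Finset

/-- σ₁, the sum-of-divisors function. -/
def sigma1 (k : ℕ) : ℕ := ∑ d ∈ k.divisors, d

/-- The term σ₁(k/d)/(k/d), taken to be 0 unless d divides k. -/
noncomputable def sigmaTerm (k d : ℕ) : ℚ :=
  if d ∣ k then (sigma1 (k / d) : ℚ) / (k / d) else 0

/-- α_p(k) = σ₁(k)/k − 3σ₁(k/2)/(k/2) + 2σ₁(k/4)/(k/4) + σ₁(k/p)/(k/p)
      − 3σ₁(k/(2p))/(k/(2p)) + 2σ₁(k/(4p))/(k/(4p)). -/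
noncomputable def alphaP (p k : ℕ) : ℚ :=
  sigmaTerm k 1 - 3 * sigmaTerm k 2 + 2 * sigmaTerm k 4
    + sigmaTerm k p - 3 * sigmaTerm k (2 * p) + 2 * sigmaTerm k (4 * p)

open ArithmeticFunction
open scoped ArithmeticFunction.sigma

theorem Nat.Coprime.pow_eq_one_or_pow_eq_one {q a b : ℕ} (hq : q ≠ 1)
    (h : (q ^ a).Coprime (q ^ b)) : q ^ a = 1 ∨ q ^ b = 1 := by
  rcases Nat.eq_zero_or_pos a with rfl | ha
  · exact .inl (pow_zero q)
  rcases Nat.eq_zero_or_pos b with rfl | hb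
  · exact .inr (pow_zero q)
  rw [Nat.coprime_pow_left_iff ha, Nat.coprime_pow_right_iff hb, Nat.coprime_self] at h
  exact absurd h hq

namespace ArithmeticFunction

variable {R : Type*}

def single [Zero R] (d : ℕ) (c : R) : ArithmeticFunction R :=
  ⟨fun n => if n ≠ 0 ∧ n = d then c else 0, by simp⟩

@[simp]
theorem single_apply [Zero R] (d n : ℕ) (c : R) :
    single d c n = if n ≠ 0 ∧ n = d then c else 0 := rfl

theorem single_mul_apply [Semiring R] (d : ℕ) (c : R) (g : ArithmeticFunction R) (k : ℕ) :
    (single d c * g) k = if d ∣ k then c * g (k / d) else 0 := by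
  rcases eq_or_ne k 0 with rfl | hk
  · simp
  rw [mul_apply, Nat.sum_divisorsAntidiagonal (fun a b => single d c a * g b)]
  simp only [single_apply, ite_mul, zero_mul]
  split_ifs with hd
  · rw [Finset.sum_eq_single_of_mem d (Nat.mem_divisors.2 ⟨hd, hk⟩)
      (fun x _ hx => if_neg (by tauto))]
    exact if_pos ⟨ne_zero_of_dvd_ne_zero hk hd, rfl⟩
  · refine Finset.sum_eq_zero fun x hx => if_neg ?_
    rintro ⟨-, rfl⟩
    exact hd (Nat.dvd_of_mem_divisors hx)

theorem single_mul_single [Semiring R] (a b : ℕ) (x y : R) :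
    single a x * single b y = single (a * b) (x * y) := by
  ext n
  rw [single_mul_apply, single_apply, single_apply]
  rcases eq_or_ne n 0 with rfl | hn
  · simp
  by_cases hab : n = a * b
  · subst hab
    rw [if_pos (dvd_mul_right a b),
      Nat.mul_div_cancel_left b (Nat.pos_of_ne_zero (left_ne_zero_of_mul hn)),
      if_pos ⟨right_ne_zero_of_mul hn, rfl⟩, if_pos ⟨hn, rfl⟩]
  · rw [if_neg (show ¬(n ≠ 0 ∧ n = a * b) from fun h => hab h.2)]
    split_ifs with hdvd h
    · exact absurd (h.2 ▸ (Nat.mul_div_cancel' hdvd).symm) hab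
    · rw [mul_zero]
    · rfl

theorem isMultiplicative_of_support_prime_pow [MonoidWithZero R] {f : ArithmeticFunction R}
    {q : ℕ} (hq : q.Prime) (h1 : f 1 = 1) (hf : ∀ n, f n ≠ 0 → ∃ i, n = q ^ i) :
    f.IsMultiplicative := by
  refine ⟨h1, fun {m n} hmn => ?_⟩
  rcases eq_or_ne m 1 with rfl | hm
  · simp [h1]
  rcases eq_or_ne n 1 with rfl | hn
  · simp [h1]
  have not_both_pows : ∀ a b, m = q ^ a → n = q ^ b → False := by
    rintro a b rfl rfl
    exact (hmn.pow_eq_one_or_pow_eq_one hq.ne_one).elim hm hn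
  have hmn0 : f (m * n) = 0 := by
    by_contra h
    obtain ⟨i, hi⟩ := hf _ h
    obtain ⟨a, -, ha⟩ := (Nat.dvd_prime_pow hq).1 (hi ▸ dvd_mul_right m n)
    obtain ⟨b, -, hb⟩ := (Nat.dvd_prime_pow hq).1 (hi ▸ dvd_mul_left n m)
    exact not_both_pows a b ha hb
  have hprod : f m * f n = 0 := by
    by_contra h
    obtain ⟨a, ha⟩ := hf m (left_ne_zero_of_mul h)
    obtain ⟨b, hb⟩ := hf n (right_ne_zero_of_mul h)
    exact not_both_pows a b ha hb
  rw [hmn0, hprod]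

end ArithmeticFunction

noncomputable def abundancy : ArithmeticFunction ℚ :=
  pdiv ((σ 1 : ArithmeticFunction ℕ) : ArithmeticFunction ℚ)
    (ArithmeticFunction.id : ArithmeticFunction ℕ)

theorem isMultiplicative_abundancy : abundancy.IsMultiplicative :=
  isMultiplicative_sigma.natCast.pdiv isMultiplicative_id.natCast

noncomputable def twoKernel : ArithmeticFunction ℚ := single 1 1 + single 2 (-3) + single 4 2

theorem isMultiplicative_twoKernel : twoKernel.IsMultiplicative := by
  refine isMultiplicative_of_support_prime_pow Nat.prime_two (by simp [twoKernel]) fun n hn => ?_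
  rcases (show n = 1 ∨ n = 2 ∨ n = 4 by by_contra h; simp_all [twoKernel]) with rfl | rfl | rfl
  exacts [⟨0, rfl⟩, ⟨1, rfl⟩, ⟨2, rfl⟩]

noncomputable def primeKernel (p : ℕ) : ArithmeticFunction ℚ := single 1 1 + single p 1

theorem isMultiplicative_primeKernel {p : ℕ} (hp : p.Prime) :
    (primeKernel p).IsMultiplicative := by
  refine isMultiplicative_of_support_prime_pow hp (by simp [primeKernel, hp.ne_one.symm])
    fun n hn => ?_
  rcases (show n = 1 ∨ n = p by by_contra h; simp_all [primeKernel]) with rfl | rfl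
  exacts [⟨0, rfl⟩, ⟨1, (pow_one _).symm⟩]

theorem primeKernel_mul_twoKernel (p : ℕ) : primeKernel p * twoKernel =
    single 1 1 + single 2 (-3) + single 4 2 + single p 1 + single (2 * p) (-3)
      + single (4 * p) 2 := by
  simp only [primeKernel, twoKernel, add_mul, mul_add, single_mul_single]
  norm_num [mul_comm p]
  abel

theorem sigmaTerm_eq_abundancy (k d : ℕ) : sigmaTerm k d = if d ∣ k then abundancy (k / d) else 0 := by
  unfold sigmaTerm
  split_ifs with h
  · rcases eq_or_ne d 0 with rfl | hd
    · simp [abundancy]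
    · rw [abundancy, pdiv_apply, natCoe_apply, natCoe_apply, sigma_one_apply, id_apply, sigma1,
        Nat.cast_div h (Nat.cast_ne_zero.mpr hd)]
  · rfl

theorem alphaP_eq_apply (p k : ℕ) : alphaP p k = (primeKernel p * twoKernel * abundancy) k := by
  simp only [primeKernel_mul_twoKernel, add_mul, ArithmeticFunction.add_apply, single_mul_apply,
    ← mul_ite_zero, alphaP, sigmaTerm_eq_abundancy]
  ring

theorem alphaP_multiplicative_general (p : ℕ) (hp : p.Prime) (k₁ k₂ : ℕ) (hco : Nat.Coprime k₁ k₂) :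
    alphaP p (k₁ * k₂) = alphaP p k₁ * alphaP p k₂ := by
  simp only [alphaP_eq_apply]
  exact ((isMultiplicative_primeKernel hp).mul isMultiplicative_twoKernel).mul
    isMultiplicative_abundancy |>.map_mul_of_coprime hco

theorem alphaP_multiplicative (p : ℕ) (hp : p.Prime) (hpodd : Odd p)
    (k₁ k₂ : ℕ) (hk₁ : 0 < k₁) (hk₂ : 0 < k₂) (hco : Nat.Coprime k₁ k₂) :
    alphaP p (k₁ * k₂) = alphaP p k₁ * alphaP p k₂ :=
  alphaP_multiplicative_general p hp k₁ k₂ hco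
end

section
/- For every odd prime p and every positive integer k: β_p(k) = 2·α_p(k) when k is odd, and β_p(k) = 0 when k is even. -/
open Finset

/-- β_p(k) = 2σ₁(k)/k − 3σ₁(k/2)/(k/2) + σ₁(k/4)/(k/4) + 2σ₁(k/p)/(k/p)
      − 3σ₁(k/(2p))/(k/(2p)) + σ₁(k/(4p))/(k/(4p)). -/
noncomputable def betaP (p k : ℕ) : ℚ :=
  2 * sigmaTerm k 1 - 3 * sigmaTerm k 2 + sigmaTerm k 4
    + 2 * sigmaTerm k p - 3 * sigmaTerm k (2 * p) + sigmaTerm k (4 * p)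

/-!
For even `k`, `β_p(k)` splits as `H(k) + H(k/p)`, the second term present only when `p ∣ k`, where
`H(n) = 2σ₁(n)/n − 3σ₁(n/2)/(n/2) + σ₁(n/4)/(n/4)`. Multiplicativity of `σ₁` gives
`σ₁(2m) = 3σ₁(m)` for odd `m` and `σ₁(4t) − 3σ₁(2t) + 2σ₁(t) = 0`, so `H` vanishes on even numbers;
as `p` is odd, `k/p` is even too. For odd `k` only `σ₁(k)/k` and `σ₁(k/p)/(k/p)` survive, and they
carry twice the coefficient in `β_p` that they carry in `α_p`.
-/

lemma sigma1_prime {q : ℕ} (hq : q.Prime) : sigma1 q = q + 1 := by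
  rw [sigma1, hq.sum_divisors, add_comm]

lemma sigma1_mul_of_coprime {m n : ℕ} (h : m.Coprime n) :
    sigma1 (m * n) = sigma1 m * sigma1 n :=
  h.sum_divisors_mul

lemma sigma1_prime_mul_of_not_dvd {q m : ℕ} (hq : q.Prime) (hm : ¬ q ∣ m) :
    sigma1 (q * m) = (q + 1) * sigma1 m := by
  rw [sigma1_mul_of_coprime ((Nat.Prime.coprime_iff_not_dvd hq).mpr hm), sigma1_prime hq]

lemma sigma1_prime_pow_succ {q : ℕ} (hq : q.Prime) (a : ℕ) :
    sigma1 (q ^ (a + 1)) = q * sigma1 (q ^ a) + 1 := by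
  simp only [sigma1, Nat.sum_divisors_prime_pow hq]
  rw [sum_range_succ', mul_sum]
  simp only [pow_succ', pow_zero]

lemma sigma1_prime_sq_mul_add {q : ℕ} (hq : q.Prime) (t : ℕ) :
    sigma1 (q ^ 2 * t) + q * sigma1 t = (q + 1) * sigma1 (q * t) := by
  rcases Nat.eq_zero_or_pos t with rfl | ht
  · simp [sigma1]
  obtain ⟨a, u, hu, rfl⟩ := Nat.exists_eq_pow_mul_and_not_dvd ht.ne' q hq.one_lt.ne'
  have hcop : ∀ j, (q ^ j).Coprime u := fun j =>
    ((Nat.Prime.coprime_iff_not_dvd hq).mpr hu).pow_left j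
  rw [show q ^ 2 * (q ^ a * u) = q ^ (a + 1 + 1) * u by ring,
    show q * (q ^ a * u) = q ^ (a + 1) * u by ring]
  simp only [sigma1_mul_of_coprime (hcop _), sigma1_prime_pow_succ hq]
  ring

lemma sigmaTerm_of_not_dvd {k d : ℕ} (h : ¬ d ∣ k) : sigmaTerm k d = 0 := if_neg h

lemma sigmaTerm_one (k : ℕ) : sigmaTerm k 1 = sigma1 k / k := by
  simp [sigmaTerm]

lemma sigmaTerm_mul_mul {p : ℕ} (hp : p ≠ 0) (k d : ℕ) :
    sigmaTerm (p * k) (p * d) = sigmaTerm k d := by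
  simp only [sigmaTerm, Nat.mul_dvd_mul_iff_left (Nat.pos_of_ne_zero hp),
    Nat.mul_div_mul_left _ _ (Nat.pos_of_ne_zero hp), Nat.cast_mul,
    mul_div_mul_left _ _ (Nat.cast_ne_zero.mpr hp : (p : ℚ) ≠ 0)]

lemma sigmaTerm_of_odd_of_even {k d : ℕ} (hk : Odd k) (hd : Even d) : sigmaTerm k d = 0 :=
  sigmaTerm_of_not_dvd fun h => Nat.not_even_iff_odd.mpr hk ((hd.two_dvd.trans h).even even_two)

/-- At `k = q n` this is `(σ₁(qn) − (q + 1)σ₁(n) + qσ₁(n/q)) / n`, the defect of the Hecke relation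
for `σ₁` at the prime `q`. -/
noncomputable def sigmaHecke (q k : ℕ) : ℚ :=
  q * sigmaTerm k 1 - (q + 1) * sigmaTerm k q + sigmaTerm k (q * q)

lemma sigmaHecke_prime_mul {q : ℕ} (hq : q.Prime) (m : ℕ) : sigmaHecke q (q * m) = 0 := by
  have hq0 : (q : ℚ) ≠ 0 := Nat.cast_ne_zero.mpr hq.ne_zero
  have h1 : sigmaTerm (q * m) q = sigmaTerm m 1 := by
    simpa using sigmaTerm_mul_mul hq.ne_zero m 1
  rw [sigmaHecke, h1, sigmaTerm_mul_mul hq.ne_zero, sigmaTerm_one, sigmaTerm_one]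
  by_cases hqm : q ∣ m
  · obtain ⟨t, rfl⟩ := hqm
    rcases Nat.eq_zero_or_pos t with rfl | ht
    · simp [sigmaTerm, sigma1]
    have h2 : sigmaTerm (q * t) q = sigmaTerm t 1 := by
      simpa using sigmaTerm_mul_mul hq.ne_zero t 1
    rw [h2, sigmaTerm_one, ← mul_assoc, ← sq]
    have ht0 : (t : ℚ) ≠ 0 := Nat.cast_ne_zero.mpr ht.ne'
    have hkey : (sigma1 (q ^ 2 * t) : ℚ) + q * sigma1 t = (q + 1) * sigma1 (q * t) := by
      exact_mod_cast sigma1_prime_sq_mul_add hq t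
    field_simp
    push_cast
    linear_combination ((q : ℚ) ^ 2 * t ^ 2) * hkey
  · have hm : (m : ℚ) ≠ 0 := Nat.cast_ne_zero.mpr (by rintro rfl; exact hqm (dvd_zero q))
    rw [sigmaTerm_of_not_dvd hqm, sigma1_prime_mul_of_not_dvd hq hqm]
    field_simp
    push_cast
    ring

lemma betaP_of_not_dvd {p k : ℕ} (h : ¬ p ∣ k) : betaP p k = sigmaHecke 2 k := by
  rw [betaP, sigmaHecke, sigmaTerm_of_not_dvd h,
    sigmaTerm_of_not_dvd fun h2 => h ((dvd_mul_left p 2).trans h2),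
    sigmaTerm_of_not_dvd fun h4 => h ((dvd_mul_left p 4).trans h4)]
  norm_num

lemma betaP_self_mul {p : ℕ} (hp : p ≠ 0) (k : ℕ) :
    betaP p (p * k) = sigmaHecke 2 (p * k) + sigmaHecke 2 k := by
  have h1 : sigmaTerm (p * k) p = sigmaTerm k 1 := by
    simpa using sigmaTerm_mul_mul hp k 1
  rw [betaP, sigmaHecke, sigmaHecke, h1, mul_comm 2 p, mul_comm 4 p, sigmaTerm_mul_mul hp,
    sigmaTerm_mul_mul hp]
  norm_num
  ring

theorem betaP_eq_two_alphaP_or_zero_general (p : ℕ) (hpodd : Odd p) (k : ℕ) :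
    (Odd k → betaP p k = 2 * alphaP p k) ∧ (Even k → betaP p k = 0) := by
  refine ⟨fun hk => ?_, fun hk => ?_⟩
  · have h2 : Even 2 := even_two
    have h4 : Even 4 := even_two.mul_left 2
    rw [betaP, alphaP, sigmaTerm_of_odd_of_even hk h2, sigmaTerm_of_odd_of_even hk h4,
      sigmaTerm_of_odd_of_even hk (h2.mul_right p), sigmaTerm_of_odd_of_even hk (h4.mul_right p)]
    ring
  · obtain ⟨m, rfl⟩ := hk.two_dvd
    by_cases hpk : p ∣ 2 * m
    · obtain ⟨k', hk'⟩ := hpk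
      obtain ⟨m', rfl⟩ : 2 ∣ k' :=
        ((Nat.coprime_two_left.mpr hpodd).dvd_mul_left).mp (hk' ▸ dvd_mul_right 2 m)
      rw [hk', betaP_self_mul hpodd.pos.ne', ← hk', sigmaHecke_prime_mul Nat.prime_two,
        sigmaHecke_prime_mul Nat.prime_two, add_zero]
    · rw [betaP_of_not_dvd hpk, sigmaHecke_prime_mul Nat.prime_two]

theorem betaP_eq_two_alphaP_or_zero (p : ℕ) (hp : p.Prime) (hpodd : Odd p)
    (k : ℕ) (hk : 0 < k) :
    (Odd k → betaP p k = 2 * alphaP p k) ∧ (Even k → betaP p k = 0) :=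
  betaP_eq_two_alphaP_or_zero_general p hpodd k
end

section
/- Let n be a positive integer. In the ring of formal power series ℚ⟦q⟧ one has the identity Π_{M≥1} (1−q^M)^n · (1−q^{4M})^{2n} = (Π_{M≥1} (1−q^{2M})^{3n}) · (1 + Σ_{l≥1} (Σ_{J ∈ J[l]} (−n)^{|J|}·W(J)) · q^l). -/
open Finset PowerSeries

/-- α(k) = σ₁(k)/k − 3σ₁(k/2)/(k/2) + 2σ₁(k/4)/(k/4). -/
noncomputable def alphaF (k : ℕ) : ℚ :=
  sigmaTerm k 1 - 3 * sigmaTerm k 2 + 2 * sigmaTerm k 4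

/-- The multiplicity j_k of the part k in the partition J. -/
def mult {N : ℕ} (J : N.Partition) (k : ℕ) : ℕ := Multiset.count k J.parts

/-- |J| = Σ_k j_k. -/
def normJ {N : ℕ} (J : N.Partition) : ℕ := Multiset.card J.parts

/-- W(J) = Π_{k≥1} α(k)^{j_k}/j_k!. -/
noncomputable def WJ {N : ℕ} (J : N.Partition) : ℚ :=
  ∏ k ∈ J.parts.toFinset, alphaF k ^ mult J k / (Nat.factorial (mult J k))

/-- The infinite product Π_{M≥1} f(M) of formal power series. Each factor below is
of the form f(M) = 1 + O(q^M), so for each fixed coefficient the finite partial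
products stabilize: the coefficient of q^d of the infinite product is the
coefficient of q^d of Π_{M=1}^{d} f(M). -/
noncomputable def infProd (f : ℕ → PowerSeries ℚ) : PowerSeries ℚ :=
  PowerSeries.mk fun d => PowerSeries.coeff d (∏ M ∈ Finset.Icc 1 d, f M)

/-!
Logarithmic derivatives turn both sides into Lambert series. Since
`d/dq log (1 - q^m) = -m q^(m-1) / (1 - q^m)` and `∑_{M ≥ 1, cM ∣ k} cM = k σ₁(k/c)/(k/c)`, the
quotient `∏ (1 - q^M)^n (1 - q^(4M))^(2n) / (1 - q^(2M))^(3n)` has logarithmic derivative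
`∑_k k (-n α(k)) q^(k-1)`. So does `∏_k exp (-n α(k) q^k)`, whose expansion is the sum over
partitions `∑_J (-n)^|J| W(J) q^(w(J))` (the partition generating function `Nat.Partition.genFun`).
Two power series over `ℚ` with the same logarithmic derivative and constant term `1` are equal.
-/

open scoped PowerSeries.WithPiTopology Nat

theorem dvd_mul_sub_one {R : Type*} [CommRing R] {x a b : R} (ha : x ∣ a - 1) (hb : x ∣ b - 1) :
    x ∣ a * b - 1 := by
  rw [show a * b - 1 = (a - 1) * b + (b - 1) by ring]
  exact dvd_add (ha.mul_right b) hb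

theorem dvd_pow_sub_one {R : Type*} [CommRing R] {x a : R} (ha : x ∣ a - 1) (k : ℕ) :
    x ∣ a ^ k - 1 :=
  ha.trans (sub_one_dvd_pow_sub_one a k)

theorem dvd_prod_sub_one {ι R : Type*} [CommRing R] {x : R} {s : Finset ι} {f : ι → R}
    (h : ∀ i ∈ s, x ∣ f i - 1) : x ∣ ∏ i ∈ s, f i - 1 :=
  prod_induction f (fun y => x ∣ y - 1) (fun _ _ => dvd_mul_sub_one) (by simp) h

namespace PowerSeries

section LogDeriv

variable {R : Type*} [CommRing R]

theorem coeff_mul_of_X_pow_dvd_sub_one {A B : R⟦X⟧} {i : ℕ} (h : X ^ (i + 1) ∣ B - 1) :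
    coeff i (A * B) = coeff i A := by
  rw [show A * B = A + A * (B - 1) by ring, map_add,
    X_pow_dvd_iff.mp (h.mul_left A) i i.lt_succ_self, add_zero]

def HasLogDeriv (f c : R⟦X⟧) : Prop := d⁄dX R f = c * f

namespace HasLogDeriv

variable {f g c e : R⟦X⟧}

theorem mul (hf : HasLogDeriv f c) (hg : HasLogDeriv g e) : HasLogDeriv (f * g) (c + e) := by
  rw [HasLogDeriv, Derivation.leibniz, hf, hg, smul_eq_mul, smul_eq_mul]
  ring

theorem pow (hf : HasLogDeriv f c) (k : ℕ) : HasLogDeriv (f ^ k) (k • c) := by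
  rw [HasLogDeriv, Derivation.leibniz_pow, hf]
  rcases k with _ | k
  · simp
  · simp only [smul_eq_mul, nsmul_eq_mul, Nat.add_sub_cancel, pow_succ]
    ring

theorem prod {ι : Type*} {s : Finset ι} {f c : ι → R⟦X⟧}
    (h : ∀ i ∈ s, HasLogDeriv (f i) (c i)) : HasLogDeriv (∏ i ∈ s, f i) (∑ i ∈ s, c i) := by
  classical
  induction s using Finset.induction_on with
  | empty => simp [HasLogDeriv]
  | insert i s hi ih =>
    rw [prod_insert hi, sum_insert hi]
    exact (h i (mem_insert_self i s)).mul (ih fun j hj => h j (mem_insert_of_mem hj))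

theorem of_mul_eq_one (hfg : f * g = 1) (hf : HasLogDeriv f c) : HasLogDeriv g (-c) := by
  rw [HasLogDeriv] at hf ⊢
  have h : f * d⁄dX R g + g * (c * f) = 0 := by
    simpa [Derivation.leibniz, hf] using congrArg (d⁄dX R) hfg
  linear_combination g * h - (d⁄dX R g + c * g) * hfg

theorem expand (hf : HasLogDeriv f c) {k : ℕ} (hk : k ≠ 0) :
    HasLogDeriv (expand k hk f) (expand k hk c * d⁄dX R (X ^ k)) := by
  rw [HasLogDeriv, expand_apply k hk f, derivative_subst (HasSubst.X_pow hk),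
    ← expand_apply k hk, hf, map_mul, ← expand_apply k hk f]
  ring

theorem eq_of_constantCoeff_eq {K : Type*} [Field K] [CharZero K] {F G c : K⟦X⟧}
    (hF : HasLogDeriv F c) (hG : HasLogDeriv G c) (hG0 : constantCoeff G ≠ 0)
    (h0 : constantCoeff F = constantCoeff G) : F = G := by
  have hGG : G * G⁻¹ = 1 := PowerSeries.mul_inv_cancel G hG0
  have hquot : HasLogDeriv (F * G⁻¹) 0 := by
    simpa using hF.mul (hG.of_mul_eq_one hGG)
  have hone : F * G⁻¹ = 1 := derivative.ext (by rw [hquot, zero_mul, derivative_one])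
    (by simp [h0, hG0])
  calc F = F * G⁻¹ * G := by rw [mul_assoc, mul_comm G⁻¹, hGG, mul_one]
    _ = G := by rw [hone, one_mul]

end HasLogDeriv

end LogDeriv

section Geom

variable {R : Type*} [CommRing R] {m : ℕ}

noncomputable def geom (m : ℕ) : R⟦X⟧ := mk fun i => if m ∣ i then 1 else 0

theorem geom_eq_expand (hm : m ≠ 0) : (geom m : R⟦X⟧) = expand m hm (mk 1) := by
  ext i
  simp [geom, coeff_expand]

theorem one_sub_X_pow_mul_geom (hm : m ≠ 0) : (1 - X ^ m) * (geom m : R⟦X⟧) = 1 := by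
  rw [geom_eq_expand hm, ← expand_X m hm, ← map_one (expand m hm), ← map_sub, ← map_mul,
    mul_comm, mk_one_mul_one_sub_eq_one, map_one]

theorem X_pow_dvd_geom_sub_one (m : ℕ) : (X : R⟦X⟧) ^ m ∣ geom m - 1 := by
  rw [X_pow_dvd_iff]
  intro i hi
  rcases eq_or_ne i 0 with rfl | hi0
  · simp [geom]
  · simp [geom, Nat.not_dvd_of_pos_of_lt (Nat.pos_of_ne_zero hi0) hi, coeff_one, hi0]

theorem X_pow_dvd_one_sub_X_pow_sub_one {k : ℕ} (h : m ≤ k) :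
    (X : R⟦X⟧) ^ m ∣ (1 - X ^ k) - 1 := by
  rw [sub_sub_cancel_left, dvd_neg]
  exact pow_dvd_pow X h

noncomputable def lambertTerm (m : ℕ) : R⟦X⟧ := X ^ (m - 1) * geom m

theorem coeff_lambertTerm (hm : m ≠ 0) (i : ℕ) :
    coeff i (lambertTerm m : R⟦X⟧) = if m ∣ i + 1 then 1 else 0 := by
  rw [lambertTerm, coeff_X_pow_mul', geom, coeff_mk]
  by_cases h : m - 1 ≤ i
  · simp only [if_pos h, show i + 1 = i - (m - 1) + m by omega, Nat.dvd_add_self_right]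
  · rw [if_neg h, if_neg (Nat.not_dvd_of_pos_of_lt i.succ_pos (by omega))]

theorem hasLogDeriv_one_sub_X_pow (hm : m ≠ 0) :
    HasLogDeriv (1 - X ^ m : R⟦X⟧) (-(m • lambertTerm m)) := by
  rw [HasLogDeriv, lambertTerm, map_sub, derivative_one, Derivation.leibniz_pow, derivative_X,
    neg_mul, smul_mul_assoc, mul_assoc, mul_comm (geom m), one_sub_X_pow_mul_geom hm]
  simp

theorem hasLogDeriv_geom (hm : m ≠ 0) : HasLogDeriv (geom m : R⟦X⟧) (m • lambertTerm m) := by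
  simpa using (hasLogDeriv_one_sub_X_pow (R := R) hm).of_mul_eq_one (one_sub_X_pow_mul_geom hm)

end Geom

section ExpFactor

variable {K : Type*} [Field K] [CharZero K] {k : ℕ}

/-- `exp (a X^k)`. -/
noncomputable def expFactor (a : K) (k : ℕ) : K⟦X⟧ :=
  mk fun i => if k ∣ i then a ^ (i / k) / (i / k)! else 0

theorem hasLogDeriv_mk_pow_div_factorial (a : K) :
    HasLogDeriv (mk fun j => a ^ j / j !) (C a) := by
  ext j
  rw [coeff_derivative, coeff_mk, coeff_C_mul, coeff_mk, Nat.factorial_succ]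
  push_cast
  field_simp
  ring

theorem hasLogDeriv_expFactor (a : K) (hk : k ≠ 0) :
    HasLogDeriv (expFactor a k) (C (k * a) * X ^ (k - 1)) := by
  have h := (hasLogDeriv_mk_pow_div_factorial a).expand hk
  have hexp : expFactor a k = expand k hk (mk fun j => a ^ j / j !) := by
    ext i
    simp [expFactor, coeff_expand]
  rw [← hexp, expand_C, Derivation.leibniz_pow, derivative_X] at h
  convert h using 1
  simp only [map_mul, map_natCast, smul_eq_mul, nsmul_eq_mul, mul_one]
  ring

theorem X_pow_dvd_expFactor_sub_one (a : K) (k : ℕ) : (X : K⟦X⟧) ^ k ∣ expFactor a k - 1 := by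
  rw [X_pow_dvd_iff]
  intro i hi
  rcases eq_or_ne i 0 with rfl | hi0
  · simp [expFactor]
  · simp [expFactor, Nat.not_dvd_of_pos_of_lt (Nat.pos_of_ne_zero hi0) hi, coeff_one, hi0]

theorem one_add_tsum_eq_expFactor [TopologicalSpace K] [T2Space K] (a : K) (hk : k ≠ 0) :
    1 + ∑' j : ℕ, (a ^ (j + 1) / (j + 1)!) • (X : K⟦X⟧) ^ (k * (j + 1)) = expFactor a k := by
  suffices HasSum (fun j : ℕ => (a ^ (j + 1) / (j + 1)!) • (X : K⟦X⟧) ^ (k * (j + 1)))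
      (expFactor a k - 1) by
    rw [this.tsum_eq, add_sub_cancel]
  have hinj : Function.Injective fun j : ℕ => k * (j + 1) := fun i j h => by
    simpa [hk] using h
  refine ((hinj.hasSum_iff fun i hi => ?_).mpr (hasSum_of_monomials_self _)).congr_fun
    fun j => ?_
  · suffices coeff i (expFactor a k - 1) = 0 by rw [this, map_zero]
    rcases eq_or_ne i 0 with rfl | hi0
    · simp [expFactor]
    · have hki : ¬ k ∣ i := by
        rintro ⟨c, rfl⟩
        have hc : 0 < c := Nat.pos_of_ne_zero (right_ne_zero_of_mul hi0)
        exact hi ⟨c - 1, by simp [Nat.sub_add_cancel hc]⟩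
      simp [expFactor, hki, coeff_one, hi0]
  · simp [expFactor, coeff_one, hk, monomial_eq_C_mul_X_pow, smul_eq_C_mul]

end ExpFactor

end PowerSeries

section InfProd

variable {f g c : ℕ → ℚ⟦X⟧}

theorem coeff_prod_Icc_eq_coeff_infProd (hf : ∀ M, 1 ≤ M → X ^ M ∣ f M - 1) {i L : ℕ}
    (hiL : i ≤ L) : coeff i (∏ M ∈ Icc 1 L, f M) = coeff i (infProd f) := by
  have hstable : ∀ L, i ≤ L →
      coeff i (∏ M ∈ Icc 1 L, f M) = coeff i (∏ M ∈ Icc 1 i, f M) := by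
    intro L hiL
    have hIoc : ∀ L, Icc 1 L = Ioc 0 L := fun L => Icc_add_one_left_eq_Ioc 0 L
    rw [hIoc, hIoc, ← prod_Ioc_consecutive f (Nat.zero_le i) hiL]
    refine coeff_mul_of_X_pow_dvd_sub_one (dvd_prod_sub_one fun M hM => ?_)
    rw [mem_Ioc] at hM
    exact (pow_dvd_pow X hM.1).trans (hf M (by omega))
  rw [infProd, coeff_mk, hstable L hiL]

theorem constantCoeff_infProd (f : ℕ → ℚ⟦X⟧) : constantCoeff (infProd f) = 1 := by
  simp [infProd, ← coeff_zero_eq_constantCoeff_apply]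

theorem infProd_congr (h : ∀ M, 1 ≤ M → f M = g M) : infProd f = infProd g := by
  ext d
  rw [infProd, infProd, coeff_mk, coeff_mk, prod_congr rfl fun M hM => h M (mem_Icc.mp hM).1]

theorem infProd_mul (hf : ∀ M, 1 ≤ M → X ^ M ∣ f M - 1) (hg : ∀ M, 1 ≤ M → X ^ M ∣ g M - 1) :
    infProd (fun M => f M * g M) = infProd f * infProd g := by
  ext d
  rw [infProd, coeff_mk, prod_mul_distrib, coeff_mul, coeff_mul]
  refine sum_congr rfl fun p hp => ?_
  rw [HasAntidiagonal.mem_antidiagonal] at hp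
  rw [coeff_prod_Icc_eq_coeff_infProd hf (by omega : p.1 ≤ d),
    coeff_prod_Icc_eq_coeff_infProd hg (by omega : p.2 ≤ d)]

theorem infProd_eq_of_hasProd (hf : ∀ M, 1 ≤ M → X ^ M ∣ f M - 1) {F : ℚ⟦X⟧}
    (h : HasProd (fun i => f (i + 1)) F) : infProd f = F := by
  ext d
  have hlim := ((WithPiTopology.continuous_coeff ℚ d).tendsto F).comp h.tendsto_prod_nat
  refine tendsto_nhds_unique (tendsto_const_nhds.congr' ?_) hlim
  filter_upwards [Filter.eventually_ge_atTop d] with L hL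
  rw [Function.comp_apply, range_eq_Ico, prod_Ico_add' f 0 L 1, zero_add,
    Ico_add_one_right_eq_Icc, coeff_prod_Icc_eq_coeff_infProd hf hL]

theorem hasLogDeriv_infProd (hf : ∀ M, 1 ≤ M → X ^ M ∣ f M - 1)
    (hc : ∀ M, 1 ≤ M → HasLogDeriv (f M) (c M)) {b : ℚ⟦X⟧}
    (hb : ∀ i L, i < L → coeff i (∑ M ∈ Icc 1 L, c M) = coeff i b) :
    HasLogDeriv (infProd f) b := by
  ext l
  have hP : HasLogDeriv (∏ M ∈ Icc 1 (l + 1), f M) (∑ M ∈ Icc 1 (l + 1), c M) :=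
    HasLogDeriv.prod fun M hM => hc M (mem_Icc.mp hM).1
  calc coeff l (d⁄dX ℚ (infProd f)) = coeff (l + 1) (infProd f) * (l + 1) := coeff_derivative _ _
    _ = coeff (l + 1) (∏ M ∈ Icc 1 (l + 1), f M) * (l + 1) := by
      rw [coeff_prod_Icc_eq_coeff_infProd hf le_rfl]
    _ = coeff l ((∑ M ∈ Icc 1 (l + 1), c M) * ∏ M ∈ Icc 1 (l + 1), f M) := by
      rw [← hP, coeff_derivative]
    _ = coeff l (b * infProd f) := by
      rw [coeff_mul, coeff_mul]
      refine sum_congr rfl fun p hp => ?_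
      rw [HasAntidiagonal.mem_antidiagonal] at hp
      rw [hb p.1 (l + 1) (by omega), coeff_prod_Icc_eq_coeff_infProd hf (by omega : p.2 ≤ l + 1)]

end InfProd

section ExpGenFun

open Nat.Partition

theorem genFun_eq_infProd_expFactor (a : ℕ → ℚ) :
    genFun (fun k c => a k ^ c / c !) = infProd fun k => expFactor (a k) k := by
  refine (infProd_eq_of_hasProd (fun k _ => X_pow_dvd_expFactor_sub_one (a k) k) ?_).symm
  have hfactor : (fun i => expFactor (a (i + 1)) (i + 1)) = fun i =>
      1 + ∑' j : ℕ, (a (i + 1) ^ (j + 1) / (j + 1)!) • (X : ℚ⟦X⟧) ^ ((i + 1) * (j + 1)) :=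
    funext fun i => (one_add_tsum_eq_expFactor _ i.succ_ne_zero).symm
  rw [hfactor]
  exact hasProd_genFun fun k c => a k ^ c / (c ! : ℚ)

theorem hasLogDeriv_genFun_exp (a : ℕ → ℚ) :
    HasLogDeriv (genFun fun k c => a k ^ c / c !) (mk fun i => (i + 1) * a (i + 1)) := by
  rw [genFun_eq_infProd_expFactor]
  refine hasLogDeriv_infProd (fun k _ => X_pow_dvd_expFactor_sub_one (a k) k)
    (fun k hk => hasLogDeriv_expFactor (a k) (by omega)) fun i L hi => ?_
  rw [map_sum, coeff_mk, sum_eq_single_of_mem (i + 1) (mem_Icc.mpr ⟨by omega, hi⟩)]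
  · rw [coeff_C_mul_X_pow, if_pos (Nat.add_sub_cancel i 1).symm]
    push_cast
    rfl
  · intro k hk hki
    rw [coeff_C_mul_X_pow, if_neg (by have := (mem_Icc.mp hk).1; omega)]

theorem pow_normJ_mul_WJ (x : ℚ) {l : ℕ} (J : l.Partition) :
    x ^ normJ J * WJ J = J.parts.toFinsupp.prod fun k c => (x * alphaF k) ^ c / c ! := by
  rw [normJ, WJ, Finsupp.prod, Multiset.toFinsupp_support, ← Multiset.toFinset_sum_count_eq,
    ← prod_pow_eq_pow_sum, ← prod_mul_distrib]
  refine prod_congr rfl fun k _ => ?_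
  rw [Multiset.toFinsupp_apply, mult, mul_pow, mul_div_assoc]

end ExpGenFun

section EtaQuotient

variable {R : Type*} [CommRing R] {M : ℕ}

noncomputable def etaQuotFactor (n M : ℕ) : R⟦X⟧ :=
  (1 - X ^ M) ^ n * (1 - X ^ (4 * M)) ^ (2 * n) * geom (2 * M) ^ (3 * n)

noncomputable def etaQuotLogDeriv (n M : ℕ) : R⟦X⟧ :=
  n • -(M • lambertTerm M) + (2 * n) • -((4 * M) • lambertTerm (4 * M))
    + (3 * n) • ((2 * M) • lambertTerm (2 * M))

theorem one_sub_X_pow_mul_etaQuotFactor (n : ℕ) (hM : M ≠ 0) :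
    (1 - X ^ (2 * M)) ^ (3 * n) * (etaQuotFactor n M : R⟦X⟧)
      = (1 - X ^ M) ^ n * (1 - X ^ (4 * M)) ^ (2 * n) := by
  rw [etaQuotFactor, mul_comm, mul_assoc, ← mul_pow, mul_comm (geom _),
    one_sub_X_pow_mul_geom (by omega), one_pow, mul_one]

theorem X_pow_dvd_etaQuotFactor_sub_one (n M : ℕ) :
    (X : R⟦X⟧) ^ M ∣ etaQuotFactor n M - 1 :=
  dvd_mul_sub_one
    (dvd_mul_sub_one (dvd_pow_sub_one (X_pow_dvd_one_sub_X_pow_sub_one le_rfl) _)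
      (dvd_pow_sub_one (X_pow_dvd_one_sub_X_pow_sub_one (by omega)) _))
    (dvd_pow_sub_one ((pow_dvd_pow X (by omega)).trans (X_pow_dvd_geom_sub_one _)) _)

theorem hasLogDeriv_etaQuotFactor (n : ℕ) (hM : M ≠ 0) :
    HasLogDeriv (etaQuotFactor n M : R⟦X⟧) (etaQuotLogDeriv n M) :=
  (((hasLogDeriv_one_sub_X_pow hM).pow n).mul ((hasLogDeriv_one_sub_X_pow (by omega)).pow _)).mul
    ((hasLogDeriv_geom (by omega)).pow _)

theorem sum_Icc_ite_mul_dvd {c k L : ℕ} (hc : c ≠ 0) (hk : k ≠ 0) (hkL : k ≤ L) :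
    ∑ M ∈ Icc 1 L, (if c * M ∣ k then ((c * M : ℕ) : ℚ) else 0) = k * sigmaTerm k c := by
  by_cases hck : c ∣ k
  · obtain ⟨k', rfl⟩ := hck
    have hk' : k' ≠ 0 := right_ne_zero_of_mul hk
    have hdiv : (Icc 1 L).filter (· ∣ k') = k'.divisors := by
      ext M
      simp only [mem_filter, mem_Icc, Nat.mem_divisors]
      refine ⟨fun h => ⟨h.2, hk'⟩, fun h => ⟨⟨Nat.pos_of_dvd_of_pos h.1 (by omega), ?_⟩, h.1⟩⟩
      exact (Nat.le_of_dvd (by omega) h.1).trans ((Nat.le_mul_of_pos_left k' (by omega)).trans hkL)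
    simp only [Nat.mul_dvd_mul_iff_left (Nat.pos_of_ne_zero hc)]
    rw [← sum_filter, hdiv, sigmaTerm, if_pos (dvd_mul_right c k'),
      Nat.mul_div_cancel_left k' (Nat.pos_of_ne_zero hc), sigma1]
    push_cast
    rw [← mul_sum]
    field_simp
  · rw [sigmaTerm, if_neg hck, mul_zero]
    exact sum_eq_zero fun M _ => if_neg fun h => hck ((dvd_mul_right c M).trans h)

theorem sum_Icc_mul_coeff_lambertTerm {c L i : ℕ} (hc : c ≠ 0) (hi : i < L) :
    ∑ M ∈ Icc 1 L, ((c * M : ℕ) : ℚ) * coeff i (lambertTerm (c * M) : ℚ⟦X⟧)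
      = (i + 1 : ℕ) * sigmaTerm (i + 1) c := by
  rw [← sum_Icc_ite_mul_dvd hc i.succ_ne_zero hi]
  refine sum_congr rfl fun M hM => ?_
  rw [coeff_lambertTerm (mul_ne_zero hc (by have := (mem_Icc.mp hM).1; omega))]
  split_ifs <;> simp

theorem coeff_sum_etaQuotLogDeriv (n : ℕ) {L i : ℕ} (hi : i < L) :
    coeff i (∑ M ∈ Icc 1 L, etaQuotLogDeriv n M : ℚ⟦X⟧) = (i + 1) * (-n * alphaF (i + 1)) := by
  have h1 := sum_Icc_mul_coeff_lambertTerm one_ne_zero hi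
  simp only [one_mul] at h1
  rw [map_sum]
  simp only [etaQuotLogDeriv, map_add, map_nsmul, map_neg]
  simp only [nsmul_eq_mul]
  simp only [sum_add_distrib, ← mul_sum, mul_neg, sum_neg_distrib, h1,
    sum_Icc_mul_coeff_lambertTerm (by norm_num : (4 : ℕ) ≠ 0) hi,
    sum_Icc_mul_coeff_lambertTerm (by norm_num : (2 : ℕ) ≠ 0) hi, alphaF]
  push_cast
  ring

theorem infProd_etaQuotFactor (n : ℕ) :
    infProd (etaQuotFactor n) = Nat.Partition.genFun fun k c => (-n * alphaF k) ^ c / c ! := by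
  have hexp := hasLogDeriv_genFun_exp fun k => -n * alphaF k
  rw [genFun_eq_infProd_expFactor] at hexp ⊢
  refine HasLogDeriv.eq_of_constantCoeff_eq ?_ hexp (by simp [constantCoeff_infProd])
    (by simp [constantCoeff_infProd])
  exact hasLogDeriv_infProd (fun M _ => X_pow_dvd_etaQuotFactor_sub_one n M)
    (fun M hM => hasLogDeriv_etaQuotFactor n (by omega)) fun i L hi => by
      rw [coeff_mk, coeff_sum_etaQuotLogDeriv n hi]

end EtaQuotient

theorem product_expansion_general (n : ℕ) :
    infProd (fun M => (1 - (X : PowerSeries ℚ) ^ M) ^ n * (1 - (X : PowerSeries ℚ) ^ (4 * M)) ^ (2 * n))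
      = infProd (fun M => (1 - (X : PowerSeries ℚ) ^ (2 * M)) ^ (3 * n)) *
        PowerSeries.mk (fun l =>
          if l = 0 then 1 else ∑ J : l.Partition, (-(n : ℚ)) ^ normJ J * WJ J) := by
  rw [← infProd_congr fun M hM => one_sub_X_pow_mul_etaQuotFactor n (by omega : M ≠ 0),
    infProd_mul (fun M _ => dvd_pow_sub_one (X_pow_dvd_one_sub_X_pow_sub_one (by omega)) _)
      (fun M _ => X_pow_dvd_etaQuotFactor_sub_one n M),
    infProd_etaQuotFactor]
  congr 1
  ext l
  rw [coeff_mk, Nat.Partition.coeff_genFun]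
  split_ifs with hl
  · subst hl
    simp
  · exact sum_congr rfl fun J _ => (pow_normJ_mul_WJ _ J).symm

theorem product_expansion (n : ℕ) (hn : 0 < n) :
    infProd (fun M => (1 - (X : PowerSeries ℚ) ^ M) ^ n * (1 - (X : PowerSeries ℚ) ^ (4 * M)) ^ (2 * n))
      = infProd (fun M => (1 - (X : PowerSeries ℚ) ^ (2 * M)) ^ (3 * n)) *
        PowerSeries.mk (fun l =>
          if l = 0 then 1 else ∑ J : l.Partition, (-(n : ℚ)) ^ normJ J * WJ J) :=
  product_expansion_general n
end

section
/- Let p be an odd prime, n a positive integer, and m ≥ 1. The m×m matrix A^{1,1} = (b_l(1+2h, 1))_{0≤l,h≤m−1} is nonsingular, with determinant det A^{1,1} = (−2n)^{m(m−1)/2}. -/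
open Finset

/-- J_o = Σ_{k odd} j_k. -/
def oddJ {N : ℕ} (J : N.Partition) : ℕ := Multiset.card (J.parts.filter Odd)

/-- J_e = Σ_{k even} j_k. -/
def evenJ {N : ℕ} (J : N.Partition) : ℕ := Multiset.card (J.parts.filter Even)

/-- W_p(J) = Π_{k≥1} α_p(k)^{j_k}/j_k!  (the factors with j_k = 0 are 1). -/
noncomputable def Wp (p : ℕ) {N : ℕ} (J : N.Partition) : ℚ :=
  ∏ k ∈ J.parts.toFinset, alphaP p k ^ mult J k / (Nat.factorial (mult J k))

/-- b_l(u,v) = Σ_{J ∈ J[l]} (−n)^{|J|} u^{J_o} v^{J_e} W_p(J). -/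
noncomputable def bP (p n l : ℕ) (u v : ℚ) : ℚ :=
  ∑ J : l.Partition, (-(n : ℚ)) ^ normJ J * u ^ oddJ J * v ^ evenJ J * Wp p J

/-!
With `v = 1`, `b_l(u, 1)` is a polynomial in `u`: grouping the partitions of `l` by their number `r`
of odd parts gives coefficients `c_{l,r}` that vanish for `r > l`, while `c_{l,l} = (-n)^l / l!`
comes from the partition `1 + ⋯ + 1` alone, because `α_p(1) = 1`. Hence `A = C Vᵀ` with `C` lower
triangular and `V` the Vandermonde matrix of the nodes `1, 3, …, 2m - 1`, whose determinant is
`∏_l 2^l l!`. The factorials cancel and `det A = ∏_l (-2n)^l`.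
-/

namespace Nat.Partition

variable {N : ℕ}

theorem card_parts_le (J : N.Partition) : Multiset.card J.parts ≤ N := by
  simpa [J.parts_sum] using Multiset.card_nsmul_le_sum fun _ hx => J.parts_pos hx

theorem parts_eq_replicate_one_of_card_eq (J : N.Partition)
    (h : Multiset.card J.parts = N) : J.parts = Multiset.replicate N 1 := by
  refine Multiset.eq_replicate.2 ⟨h, fun x hx => ?_⟩
  by_contra hx1
  have hlt : (J.parts.map fun _ => 1).sum < (J.parts.map fun x => x).sum :=
    Multiset.sum_lt_sum (fun _ hi => J.parts_pos hi) ⟨x, hx, by have := J.parts_pos hx; omega⟩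
  rw [Multiset.map_id', J.parts_sum, Multiset.map_const', Multiset.sum_replicate, smul_eq_mul,
    mul_one, h] at hlt
  exact lt_irrefl N hlt

def ones (N : ℕ) : N.Partition where
  parts := Multiset.replicate N 1
  parts_pos hi := by rw [Multiset.eq_of_mem_replicate hi]; exact one_pos
  parts_sum := by simp

end Nat.Partition

open Nat.Partition

theorem oddJ_le_normJ {N : ℕ} (J : N.Partition) : oddJ J ≤ normJ J :=
  Multiset.card_le_card (Multiset.filter_le _ _)

theorem oddJ_le {N : ℕ} (J : N.Partition) : oddJ J ≤ N :=
  (oddJ_le_normJ J).trans J.card_parts_le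

theorem eq_ones_of_oddJ_eq {N : ℕ} (J : N.Partition) (h : oddJ J = N) : J = ones N :=
  Nat.Partition.ext <| J.parts_eq_replicate_one_of_card_eq <|
    le_antisymm J.card_parts_le (h.ge.trans (oddJ_le_normJ J))

theorem oddJ_ones (N : ℕ) : oddJ (ones N) = N := by
  rw [oddJ, ones, Multiset.filter_eq_self.2 fun a ha => ?_, Multiset.card_replicate]
  rw [Multiset.eq_of_mem_replicate ha]
  exact odd_one

theorem normJ_ones (N : ℕ) : normJ (ones N) = N := by
  simp [normJ, ones]

theorem alphaP_one {p : ℕ} (hp : p ≠ 1) : alphaP p 1 = 1 := by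
  simp [alphaP, sigmaTerm, Nat.dvd_one, hp, sigma1]

theorem Wp_ones {p : ℕ} (hp : p ≠ 1) (N : ℕ) : Wp p (ones N) = 1 / N.factorial := by
  rcases eq_or_ne N 0 with rfl | hN
  · simp [Wp, ones]
  · simp [Wp, mult, ones, Multiset.toFinset_replicate, hN, alphaP_one hp]

/-- The coefficient of `u ^ r` in the polynomial `u ↦ b_l(u, 1)`. -/
noncomputable def oddCoeff (p n l r : ℕ) : ℚ :=
  ∑ J : l.Partition with oddJ J = r, (-(n : ℚ)) ^ normJ J * Wp p J

theorem bP_one_eq_sum_oddCoeff (p n : ℕ) {l m : ℕ} (hlm : l < m) (u : ℚ) :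
    bP p n l u 1 = ∑ r ∈ range m, oddCoeff p n l r * u ^ r := by
  rw [bP, ← sum_fiberwise_of_maps_to fun J _ => mem_range.2 ((oddJ_le J).trans_lt hlm)]
  refine sum_congr rfl fun r _ => ?_
  rw [oddCoeff, sum_mul]
  refine sum_congr rfl fun J hJ => ?_
  rw [(mem_filter.1 hJ).2, one_pow, mul_one]
  ring

theorem oddCoeff_eq_zero_of_lt (p n : ℕ) {l r : ℕ} (h : l < r) : oddCoeff p n l r = 0 :=
  sum_eq_zero fun J hJ => absurd ((mem_filter.1 hJ).2 ▸ oddJ_le J) h.not_ge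

theorem oddCoeff_self {p : ℕ} (hp : p ≠ 1) (n l : ℕ) :
    oddCoeff p n l l = (-(n : ℚ)) ^ l / l.factorial := by
  rw [oddCoeff, sum_eq_single_of_mem (ones l) (mem_filter.2 ⟨mem_univ _, oddJ_ones l⟩)
    fun J hJ hne => absurd (eq_ones_of_oddJ_eq J (mem_filter.1 hJ).2) hne,
    normJ_ones, Wp_ones hp, mul_one_div]

theorem det_oddCoeff {p : ℕ} (hp : p ≠ 1) (n m : ℕ) :
    (Matrix.of fun l r : Fin m => oddCoeff p n l r).det
      = ∏ l : Fin m, (-(n : ℚ)) ^ (l : ℕ) / (l : ℕ).factorial := by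
  have hlower : (Matrix.of fun l r : Fin m => oddCoeff p n l r).IsLowerTriangular :=
    fun _ _ hlr => oddCoeff_eq_zero_of_lt p n hlr
  rw [Matrix.det_of_isLowerTriangular _ hlower]
  exact prod_congr rfl fun l _ => oddCoeff_self hp n l

theorem Matrix.det_vandermonde_natCast {R : Type*} [CommRing R] (m : ℕ) :
    (vandermonde fun i : Fin m => ((i : ℕ) : R)).det = ∏ i : Fin m, ((i : ℕ).factorial : R) := by
  cases m with
  | zero => simp
  | succ k =>
    rw [det_vandermonde_id_eq_superFactorial, ← Nat.prod_range_succ_factorial, Nat.cast_prod,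
      Fin.prod_univ_eq_prod_range (fun i => (i.factorial : R))]

theorem Matrix.det_vandermonde_arithmetic {R : Type*} [CommRing R] (m : ℕ) (a d : R) :
    (vandermonde fun i : Fin m => a + d * (i : ℕ)).det
      = ∏ i : Fin m, d ^ (i : ℕ) * (i : ℕ).factorial := by
  have hscale : vandermonde (fun i : Fin m => d * (i : ℕ))
      = vandermonde (fun i : Fin m => ((i : ℕ) : R))
        * Matrix.diagonal fun j : Fin m => d ^ (j : ℕ) := by
    ext i j
    simp [vandermonde_apply, mul_pow, mul_comm]
  simp_rw [add_comm a, det_vandermonde_add, hscale, det_mul, Matrix.det_diagonal,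
    det_vandermonde_natCast, ← prod_mul_distrib, mul_comm]

theorem Fin.prod_pow_val {M : Type*} [CommMonoid M] (x : M) (m : ℕ) :
    ∏ i : Fin m, x ^ (i : ℕ) = x ^ (m * (m - 1) / 2) := by
  rw [prod_pow_eq_pow_sum, Fin.sum_univ_eq_sum_range (fun i => i) m, sum_range_id]

theorem A11_det_general (p : ℕ) (hp : p.Prime) (n : ℕ) (hn : 0 < n)
    (m : ℕ)
    (A : Matrix (Fin m) (Fin m) ℚ)
    (hA : ∀ l h : Fin m, A l h = bP p n l (1 + 2 * (h : ℕ)) 1) :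
    A.det = (-(2 * (n : ℚ))) ^ (m * (m - 1) / 2) ∧ A.det ≠ 0 := by
  have hfactor : A = (Matrix.of fun l r : Fin m => oddCoeff p n l r)
      * (Matrix.vandermonde fun h : Fin m => 1 + 2 * ((h : ℕ) : ℚ)).transpose := by
    ext l h
    rw [hA, bP_one_eq_sum_oddCoeff p n l.isLt, Matrix.mul_apply,
      ← Fin.sum_univ_eq_sum_range (fun r => oddCoeff p n l r * (1 + 2 * ((h : ℕ) : ℚ)) ^ r)]
    rfl
  have hterm (l : ℕ) : (-(n : ℚ)) ^ l / l.factorial * (2 ^ l * l.factorial) = (-(2 * n)) ^ l := by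
    rw [show -(2 * (n : ℚ)) = -n * 2 by ring, mul_pow]
    field_simp
  have hdet : A.det = (-(2 * (n : ℚ))) ^ (m * (m - 1) / 2) := by
    rw [hfactor, Matrix.det_mul, Matrix.det_transpose, det_oddCoeff hp.ne_one,
      Matrix.det_vandermonde_arithmetic, ← prod_mul_distrib]
    simp_rw [hterm, Fin.prod_pow_val]
  exact ⟨hdet, hdet ▸ pow_ne_zero _ (neg_ne_zero.2 (by positivity))⟩

theorem A11_det (p : ℕ) (hp : p.Prime) (hpodd : Odd p) (n : ℕ) (hn : 0 < n)
    (m : ℕ) (hm : 1 ≤ m)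
    (A : Matrix (Fin m) (Fin m) ℚ)
    (hA : ∀ l h : Fin m, A l h = bP p n l (1 + 2 * (h : ℕ)) 1) :
    A.det = (-(2 * (n : ℚ))) ^ (m * (m - 1) / 2) ∧ A.det ≠ 0 :=
  A11_det_general p hp n hn m A hA
end

section
/- For all integers m ≥ 1 and N ≥ 0: Σ_{h=0}^{m} h^N·(−1)^{h−1}·C(m,h) = 0 when 0 ≤ N < m, and Σ_{h=0}^{m} h^N·(−1)^{h−1}·C(m,h) = (−1)^{m−1}·N!·P_{N−m}(m) when N ≥ m (with the convention 0^0 = 1). -/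
/-!
Write `D m N = ∑ₕ (-1)^h C(m,h) h^N`, so that the sum in the theorem is `-D m N`.
Since `h C(n+1,h) = (n+1) (C(n+1,h) - C(n,h))`, multiplying the summands by `h` gives
`D (n+1) (N+1) = (n+1) (D (n+1) N - D n N)`. Together with `D m 0 = (1-1)^m` this shows
`D m N = 0` for `N < m` by induction on `N`, and the same recurrence, compared with the one
defining `P`, gives `D m N = (-1)^m N! P_{N-m}(m)` for `m ≤ N`.
-/

open Finset

/-- P_r(m), defined by P_0(m) = 1, P_r(0) = 0 for r ≥ 1, and
    (r+m)·P_r(m) = m·(P_{r−1}(m) + P_r(m−1)) for r, m ≥ 1. -/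
def Ppoly : ℕ → ℕ → ℚ
  | 0, _ => 1
  | _ + 1, 0 => 0
  | r + 1, m + 1 =>
      ((m : ℚ) + 1) * (Ppoly r (m + 1) + Ppoly (r + 1) m) / ((r : ℚ) + 1 + ((m : ℚ) + 1))

lemma Ppoly_zero_left (m : ℕ) : Ppoly 0 m = 1 := by simp [Ppoly]

lemma Ppoly_succ_zero (r : ℕ) : Ppoly (r + 1) 0 = 0 := by simp [Ppoly]

lemma Ppoly_succ_succ (r n : ℕ) :
    ((r : ℚ) + n + 2) * Ppoly (r + 1) (n + 1) = (n + 1) * (Ppoly r (n + 1) + Ppoly (r + 1) n) := by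
  have hden : (r : ℚ) + 1 + (n + 1) ≠ 0 := by positivity
  rw [Ppoly]
  field_simp
  ring

lemma Nat.mul_choose_succ_add (n h : ℕ) :
    h * (n + 1).choose h + (n + 1) * n.choose h = (n + 1) * (n + 1).choose h := by
  rw [mul_comm (n + 1), Nat.choose_mul_succ_eq]
  rcases le_or_gt h (n + 1) with hle | hlt
  · rw [mul_comm _ (n + 1 - h), ← Nat.add_mul, Nat.add_sub_cancel' hle, mul_comm]
  · simp [Nat.choose_eq_zero_of_lt hlt]

section AltBinomMoment

variable {R : Type*} [CommRing R]

variable (R) in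
def altBinomMoment (m N : ℕ) : R := ∑ h ∈ range (m + 1), (-1) ^ h * m.choose h * (h : R) ^ N

lemma altBinomMoment_zero_left (N : ℕ) : altBinomMoment R 0 N = 0 ^ N := by
  simp [altBinomMoment]

lemma altBinomMoment_zero_right {m : ℕ} (hm : m ≠ 0) : altBinomMoment R m 0 = 0 := by
  have h := congrArg (Int.cast : ℤ → R) (Int.alternating_sum_range_choose_of_ne hm)
  push_cast at h
  simpa [altBinomMoment] using h

lemma altBinomMoment_eq_sum_range_add_two (n N : ℕ) :
    altBinomMoment R n N = ∑ h ∈ range (n + 2), (-1) ^ h * n.choose h * (h : R) ^ N := by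
  simp [altBinomMoment, sum_range_succ _ (n + 1)]

lemma altBinomMoment_succ_succ (n N : ℕ) :
    altBinomMoment R (n + 1) (N + 1) =
      (n + 1) * (altBinomMoment R (n + 1) N - altBinomMoment R n N) := by
  rw [altBinomMoment_eq_sum_range_add_two n, altBinomMoment, altBinomMoment, ← sum_sub_distrib,
    mul_sum]
  refine sum_congr rfl fun h _ => ?_
  have key := congrArg (Nat.cast (R := R)) (Nat.mul_choose_succ_add n h)
  push_cast at key
  linear_combination (-1) ^ h * (h : R) ^ N * key

lemma altBinomMoment_eq_zero_of_lt {m N : ℕ} (h : N < m) : altBinomMoment R m N = 0 := by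
  induction N generalizing m with
  | zero => exact altBinomMoment_zero_right (by omega)
  | succ N ih =>
    obtain ⟨n, rfl⟩ : ∃ n, m = n + 1 := ⟨m - 1, by omega⟩
    rw [altBinomMoment_succ_succ, ih (by omega), ih (by omega), sub_zero, mul_zero]

end AltBinomMoment

lemma altBinomMoment_eq_of_le {m N : ℕ} (h : m ≤ N) :
    altBinomMoment ℚ m N = (-1) ^ m * N.factorial * Ppoly (N - m) m := by
  induction N generalizing m with
  | zero =>
    obtain rfl : m = 0 := by omega
    simp [altBinomMoment_zero_left, Ppoly_zero_left]
  | succ N ih =>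
    rcases m with _ | n
    · simp [altBinomMoment_zero_left, Ppoly_succ_zero]
    rw [altBinomMoment_succ_succ]
    rcases (Nat.le_of_lt_succ h).eq_or_lt with rfl | hlt
    · rw [altBinomMoment_eq_zero_of_lt (Nat.lt_succ_self n), ih le_rfl, Nat.sub_self,
        Nat.sub_self, Ppoly_zero_left, Ppoly_zero_left, Nat.factorial_succ]
      push_cast
      ring
    · obtain ⟨r, rfl⟩ : ∃ r, N = r + n + 1 := ⟨N - n - 1, by omega⟩
      rw [ih (by omega), ih (by omega), show r + n + 1 - (n + 1) = r by omega,
        show r + n + 1 - n = r + 1 by omega, show r + n + 1 + 1 - (n + 1) = r + 1 by omega,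
        Nat.factorial_succ (r + n + 1)]
      push_cast
      linear_combination (-(-1) ^ (n + 1) * ((r + n + 1).factorial : ℚ)) * Ppoly_succ_succ r n

lemma neg_one_zpow_natCast_sub_one {K : Type*} [DivisionRing K] (h : ℕ) :
    (-1 : K) ^ ((h : ℤ) - 1) = -(-1) ^ h := by
  rw [zpow_sub₀ (by norm_num), zpow_one, zpow_natCast, div_neg, div_one]

theorem binomial_moment_identity (m N : ℕ) (hm : 1 ≤ m) :
    (N < m →
        ∑ h ∈ Finset.range (m + 1),
          (h : ℚ) ^ N * (-1 : ℚ) ^ ((h : ℤ) - 1) * (m.choose h) = 0)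
      ∧ (m ≤ N →
        ∑ h ∈ Finset.range (m + 1),
          (h : ℚ) ^ N * (-1 : ℚ) ^ ((h : ℤ) - 1) * (m.choose h)
          = (-1 : ℚ) ^ (m - 1) * (Nat.factorial N) * Ppoly (N - m) m) := by
  have hsum : ∑ h ∈ range (m + 1), (h : ℚ) ^ N * (-1 : ℚ) ^ ((h : ℤ) - 1) * (m.choose h) =
      -altBinomMoment ℚ m N := by
    rw [altBinomMoment, ← sum_neg_distrib]
    refine sum_congr rfl fun h _ => ?_
    rw [neg_one_zpow_natCast_sub_one]
    ring
  obtain ⟨n, rfl⟩ : ∃ n, m = n + 1 := ⟨m - 1, by omega⟩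
  refine ⟨fun hlt => ?_, fun hle => ?_⟩
  · rw [hsum, altBinomMoment_eq_zero_of_lt hlt, neg_zero]
  · rw [hsum, altBinomMoment_eq_of_le hle, Nat.add_sub_cancel]
    ring
end

section
/- Define rational numbers c_{r,s} for integers r ≥ 0, 0 ≤ s ≤ r, by c_{0,0} = 1, c_{r−1,r} = 0, c_{r,0} = 0 for r ≥ 1, and c_{r,s} = (s/(r+s))·(c_{r−1,s−1} + c_{r−1,s}) for r ≥ 1, 1 ≤ s ≤ r. Then for all integers r ≥ 0 and m ≥ 0, P_r(m) = Σ_{s=0}^{r} c_{r,s}·C(m,s). -/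
/-- c_{r,s}: c_{0,0} = 1, c_{r,0} = 0 for r ≥ 1, c_{r−1,r} = 0 (out-of-range values vanish),
and c_{r,s} = (s/(r+s))·(c_{r−1,s−1} + c_{r−1,s}) for r ≥ 1, 1 ≤ s ≤ r. -/
def cCoef : ℕ → ℕ → ℚ
  | 0, 0 => 1
  | 0, _ + 1 => 0
  | _ + 1, 0 => 0
  | r + 1, s + 1 =>
      if s + 1 ≤ r + 1 then
        (((s : ℚ) + 1) / ((r : ℚ) + 1 + ((s : ℚ) + 1))) * (cCoef r s + cCoef r (s + 1))
      else 0

/-!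
Both sides satisfy the defining recurrence of `P`, which determines `P` uniquely. For the
binomial sum this is a termwise identity: after Pascal's rule and an index shift, the coefficient
of `C(m, s)` balances because of the recurrence of `c` together with
`(s+1)·C(m+1, s+1) = (m+1)·C(m, s)` and `(m-s)·C(m+1, s+1) = (m+1)·C(m, s+1)`.
-/

open Finset

theorem eq_Ppoly_of_recurrence (f : ℕ → ℕ → ℚ) (h_zero_left : ∀ m, f 0 m = 1)
    (h_zero_right : ∀ r, f (r + 1) 0 = 0)
    (h_succ : ∀ r m : ℕ, ((r : ℚ) + 1 + ((m : ℚ) + 1)) * f (r + 1) (m + 1) =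
      ((m : ℚ) + 1) * (f r (m + 1) + f (r + 1) m)) :
    ∀ r m : ℕ, f r m = Ppoly r m
  | 0, m => by rw [h_zero_left, Ppoly]
  | r + 1, 0 => by rw [h_zero_right, Ppoly]
  | r + 1, m + 1 => by
    have hpos : (r : ℚ) + 1 + ((m : ℚ) + 1) ≠ 0 := by positivity
    rw [Ppoly, eq_div_iff hpos, mul_comm, h_succ,
      eq_Ppoly_of_recurrence f h_zero_left h_zero_right h_succ r (m + 1),
      eq_Ppoly_of_recurrence f h_zero_left h_zero_right h_succ (r + 1) m]

theorem cCoef_succ_zero (r : ℕ) : cCoef (r + 1) 0 = 0 := rfl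

theorem cCoef_self_succ (r : ℕ) : cCoef r (r + 1) = 0 := by
  cases r with
  | zero => rfl
  | succ r => rw [cCoef, if_neg (by omega)]

theorem cCoef_succ_succ_mul {r s : ℕ} (h : s ≤ r) :
    ((r : ℚ) + s + 2) * cCoef (r + 1) (s + 1) = ((s : ℚ) + 1) * (cCoef r s + cCoef r (s + 1)) := by
  rw [cCoef, if_pos (by omega)]
  field_simp
  ring

theorem cast_add_one_mul_choose_succ (m s : ℕ) :
    ((s : ℚ) + 1) * (m + 1).choose (s + 1) = ((m : ℚ) + 1) * m.choose s := by
  have h : ((m + 1 : ℕ) : ℚ) * m.choose s = (m + 1).choose (s + 1) * ((s + 1 : ℕ) : ℚ) := by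
    exact_mod_cast Nat.add_one_mul_choose_eq m s
  push_cast at h
  linear_combination -h

theorem cast_sub_mul_choose_succ (m s : ℕ) :
    ((m : ℚ) - s) * (m + 1).choose (s + 1) = ((m : ℚ) + 1) * m.choose (s + 1) := by
  have pascal : ((m + 1).choose (s + 1) : ℚ) = m.choose s + m.choose (s + 1) := by
    exact_mod_cast Nat.choose_succ_succ' m s
  linear_combination ((m : ℚ) + 1) * pascal - cast_add_one_mul_choose_succ m s

def cBinomSum (r m : ℕ) : ℚ := ∑ s ∈ range (r + 1), cCoef r s * (m.choose s : ℚ)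

theorem cBinomSum_zero_left (m : ℕ) : cBinomSum 0 m = 1 := by
  simp [cBinomSum, cCoef]

theorem cBinomSum_succ_zero (r : ℕ) : cBinomSum (r + 1) 0 = 0 := by
  rw [cBinomSum, sum_range_succ']
  simp [cCoef_succ_zero]

theorem cBinomSum_succ_right (r m : ℕ) :
    cBinomSum r (m + 1) = ∑ s ∈ range (r + 1), (cCoef r s + cCoef r (s + 1)) * (m.choose s : ℚ) := by
  calc cBinomSum r (m + 1)
      = ∑ s ∈ range r, cCoef r (s + 1) * ((m.choose s : ℚ) + m.choose (s + 1)) + cCoef r 0 := by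
        rw [cBinomSum, sum_range_succ']
        simp [Nat.choose_succ_succ']
    _ = ∑ s ∈ range (r + 1), cCoef r (s + 1) * (m.choose s : ℚ) +
          (∑ s ∈ range r, cCoef r (s + 1) * (m.choose (s + 1) : ℚ) + cCoef r 0 * m.choose 0) := by
        rw [sum_range_succ _ r, cCoef_self_succ]
        simp only [mul_add, sum_add_distrib, Nat.choose_zero_right]
        ring
    _ = _ := by
        rw [← sum_range_succ' (fun s => cCoef r s * (m.choose s : ℚ)), ← sum_add_distrib]
        exact sum_congr rfl fun s _ => by ring

theorem cBinomSum_succ_succ (r m : ℕ) :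
    ((r : ℚ) + 1 + ((m : ℚ) + 1)) * cBinomSum (r + 1) (m + 1) =
      ((m : ℚ) + 1) * (cBinomSum r (m + 1) + cBinomSum (r + 1) m) := by
  have termwise : ∀ s ∈ range (r + 1),
      ((r : ℚ) + 1 + ((m : ℚ) + 1)) * (cCoef (r + 1) (s + 1) * ((m + 1).choose (s + 1) : ℚ)) =
        ((m : ℚ) + 1) * ((cCoef r s + cCoef r (s + 1)) * (m.choose s : ℚ) +
          cCoef (r + 1) (s + 1) * (m.choose (s + 1) : ℚ)) := by
    intro s hs
    linear_combination ((m + 1).choose (s + 1) : ℚ) *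
        cCoef_succ_succ_mul (Nat.lt_succ_iff.mp (mem_range.mp hs)) +
      (cCoef r s + cCoef r (s + 1)) * cast_add_one_mul_choose_succ m s +
      cCoef (r + 1) (s + 1) * cast_sub_mul_choose_succ m s
  rw [cBinomSum_succ_right r m, cBinomSum, cBinomSum, sum_range_succ' _ (r + 1),
    sum_range_succ' _ (r + 1), cCoef_succ_zero, zero_mul, zero_mul, add_zero, add_zero,
    mul_sum, sum_congr rfl termwise, ← mul_sum, sum_add_distrib]

theorem Ppoly_binomial_expansion (r m : ℕ) :
    Ppoly r m = ∑ s ∈ Finset.range (r + 1), cCoef r s * (m.choose s : ℚ) :=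
  (eq_Ppoly_of_recurrence cBinomSum cBinomSum_zero_left cBinomSum_succ_zero
    cBinomSum_succ_succ r m).symm
end
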